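/- arXiv:math/0409303 — 5 statements merged into one kernel-verified Lean document; each statement's English description precedes it below -/
import Mathlib

section
/- Let f(z) = (max(0, min(1, z))) ⋆ G_ε be the convolution of the truncation function with a smooth nonnegative mollifier G_ε supported in [-ε, ε] with total integral 1, and set λ = 1 - ε for 0 < ε < 1. Then ∫_ℝ f'(z)² (1 - λ f'(z)) dz ≤ 3ε. -/
open MeasureTheory

/-- For the mollified truncation `f = max(0, min(1, ·)) ⋆ G_ε` and `λ = 1 - ε`,
the wave-energy integrand satisfies `∫ f'(z)²(1 - λ f'(z)) dz ≤ 3ε`. -/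
theorem mollified_wave_energy_bound
    (ε : ℝ) (hε : 0 < ε) (hε1 : ε < 1)
    (G : ℝ → ℝ) (hG : ContDiff ℝ (⊤ : ℕ∞) G) (hGpos : ∀ x, 0 ≤ G x)
    (hGsupp : Function.support G ⊆ Set.Icc (-ε) ε)
    (hGint : ∫ x : ℝ, G x = 1)
    (f : ℝ → ℝ)
    (hf : ∀ z : ℝ, f z = ∫ y : ℝ, max 0 (min 1 y) * G (z - y)) :
    ∫ z : ℝ, (deriv f z)^2 * (1 - (1 - ε) * deriv f z) ≤ 3 * ε := by
  have hGc : Continuous G := hG.continuous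
  have hGz : ∀ t : ℝ, t ∉ Set.Icc (-ε) ε → G t = 0 := by
    intro t ht
    by_contra h
    exact ht (hGsupp h)
  have hGK : HasCompactSupport G := HasCompactSupport.intro isCompact_Icc hGz
  have hGi : Integrable G := hGc.integrable_of_hasCompactSupport hGK
  set H : ℝ → ℝ := fun x => ∫ t in Set.Iic x, G t with hHdef
  have hHsub : ∀ p q : ℝ, H q - H p = ∫ t in p..q, G t := fun p q =>
    intervalIntegral.integral_Iic_sub_Iic hGi.integrableOn hGi.integrableOn
  have hH0 : ∀ x : ℝ, x ≤ -ε → H x = 0 := by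
    intro x hx
    rw [hHdef]
    simp only
    rw [integral_Iic_eq_integral_Iio' (measure_singleton x)]
    have hzz : ∀ t ∈ Set.Iio x, G t = (fun _ => (0:ℝ)) t := by
      intro t ht
      apply hGz t
      simp only [Set.mem_Icc, not_and_or, not_le]
      left
      exact lt_of_lt_of_le ht hx
    rw [setIntegral_congr_fun measurableSet_Iio hzz]
    simp
  have hH1 : ∀ x : ℝ, ε ≤ x → H x = 1 := by
    intro x hx
    rw [hHdef]
    simp only
    rw [setIntegral_eq_integral_of_forall_compl_eq_zero (fun t ht => hGz t (by
      simp only [Set.mem_Iic, not_le] at ht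
      simp only [Set.mem_Icc, not_and_or, not_le]
      right; exact lt_of_le_of_lt hx ht))]
    exact hGint
  have hHcont : Continuous H := by
    have h0 : H = fun x => H (-1-ε) + ∫ t in (-1-ε)..x, G t := by
      funext x
      rw [← hHsub]
      ring
    rw [h0]
    exact continuous_const.add
      (intervalIntegral.continuous_primitive (fun p q => hGi.intervalIntegrable) _)
  -- The key identity: f z = ∫ u in (z-1)..z, H u
  have hfH : ∀ z : ℝ, f z = ∫ u in (z-1)..z, H u := by
    intro z
    rw [hf z]
    have h1 : ∫ y : ℝ, max 0 (min 1 y) * G (z - y)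
        = ∫ t : ℝ, max 0 (min 1 (z - t)) * G t := by
      rw [← integral_sub_left_eq_self (fun y => max 0 (min 1 y) * G (z - y)) volume z]
      congr 1
      funext t
      simp
    rw [h1]
    have hsfin : IsFiniteMeasure (volume.restrict (Set.Ioc (z-1) z)) := by
      constructor
      rw [Measure.restrict_apply_univ, Real.volume_Ioc]
      exact ENNReal.ofReal_lt_top
    have h2 : ∀ t : ℝ, max 0 (min 1 (z - t)) * G t
        = ∫ u in Set.Ioc (z-1) z, (Set.Ici t).indicator (fun _ => G t) u := by
      intro t
      rw [setIntegral_indicator measurableSet_Ici, setIntegral_const, smul_eq_mul]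
      rcases le_or_gt t (z-1) with h | h
      · have hss : Set.Ioc (z-1) z ∩ Set.Ici t = Set.Ioc (z-1) z := by
          rw [Set.inter_eq_left]
          intro u hu
          exact le_trans h (le_of_lt hu.1)
        rw [hss, measureReal_def, Real.volume_Ioc]
        rw [ENNReal.toReal_ofReal (by linarith)]
        have hv : (0 ⊔ 1 ⊓ (z - t)) = 1 := by
          rw [min_eq_left (by linarith : (1:ℝ) ≤ z - t)]
          exact max_eq_right zero_le_one
        rw [hv]
        ring
      · have hss : Set.Ioc (z-1) z ∩ Set.Ici t = Set.Icc t z := by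
          ext u
          simp only [Set.mem_inter_iff, Set.mem_Ioc, Set.mem_Ici, Set.mem_Icc]
          constructor
          · rintro ⟨⟨_, h2⟩, h3⟩; exact ⟨h3, h2⟩
          · rintro ⟨h1, h2⟩; exact ⟨⟨lt_of_lt_of_le h h1, h2⟩, h1⟩
        rw [hss, measureReal_def, Real.volume_Icc]
        rcases le_or_gt t z with h4 | h4
        · rw [ENNReal.toReal_ofReal (by linarith)]
          have hv : (0 ⊔ 1 ⊓ (z - t)) = z - t := by
            rw [min_eq_right (by linarith : z - t ≤ 1)]
            exact max_eq_right (by linarith)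
          rw [hv]
        · rw [ENNReal.ofReal_eq_zero.mpr (by linarith), ENNReal.toReal_zero]
          have hv : (0 ⊔ 1 ⊓ (z - t)) = 0 := by
            rw [min_eq_right (by linarith : z - t ≤ 1)]
            exact max_eq_left (by linarith)
          rw [hv]
    rw [integral_congr_ae (Filter.Eventually.of_forall h2)]
    have hswap : ∫ t : ℝ, ∫ u in Set.Ioc (z-1) z, (Set.Ici t).indicator (fun _ => G t) u
        = ∫ u in Set.Ioc (z-1) z, ∫ t : ℝ, (Set.Ici t).indicator (fun _ => G t) u := by
      apply integral_integral_swap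
      have hmeas : Measurable (Function.uncurry fun (t u : ℝ) =>
          (Set.Ici t).indicator (fun _ => G t) u) := by
        have : (Function.uncurry fun (t u : ℝ) => (Set.Ici t).indicator (fun _ => G t) u)
            = Set.indicator {p : ℝ × ℝ | p.1 ≤ p.2} (fun p => G p.1) := by
          funext p
          rcases p with ⟨t, u⟩
          by_cases h : t ≤ u
          · simp [Function.uncurry, Set.indicator, h]
          · simp [Function.uncurry, Set.indicator, h]
        rw [this]
        exact (hGc.measurable.comp measurable_fst).indicator
          (measurableSet_le measurable_fst measurable_snd)
      apply Integrable.mono' ((hGi.norm).mul_prod (integrable_const 1))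
        hmeas.aestronglyMeasurable
      apply Filter.Eventually.of_forall
      rintro ⟨t, u⟩
      simp only [Function.uncurry, Set.indicator, norm_mul]
      by_cases h : u ∈ Set.Ici t
      · simp [h]
      · simp [h, abs_nonneg]
    rw [hswap]
    rw [intervalIntegral.integral_of_le (by linarith : z - 1 ≤ z)]
    apply setIntegral_congr_fun measurableSet_Ioc
    intro u _
    show (∫ t : ℝ, (Set.Ici t).indicator (fun _ => G t) u) = H u
    have h4 : ∀ t : ℝ, (Set.Ici t).indicator (fun _ => G t) u = (Set.Iic u).indicator G t := by
      intro t
      by_cases h : t ≤ u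
      · simp [Set.indicator, h]
      · simp [Set.indicator, h]
    rw [integral_congr_ae (Filter.Eventually.of_forall h4)]
    rw [integral_indicator measurableSet_Iic]
  -- derivative of f
  have hHii : ∀ p q : ℝ, IntervalIntegrable H volume p q := fun p q =>
    hHcont.intervalIntegrable p q
  set F : ℝ → ℝ := fun x => ∫ u in (0:ℝ)..x, H u with hFdef
  have hF : ∀ x : ℝ, HasDerivAt F (H x) x := fun x =>
    intervalIntegral.integral_hasDerivAt_right (hHii 0 x)
      (hHcont.stronglyMeasurableAtFilter volume _) hHcont.continuousAt
  have hfF : ∀ z : ℝ, f z = F z - F (z-1) := by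
    intro z
    have hadd := intervalIntegral.integral_add_adjacent_intervals
      (hHii 0 (z-1)) (hHii (z-1) z)
    rw [hfH z]
    rw [hFdef]
    simp only
    linarith [hadd]
  set D : ℝ → ℝ := fun z => H z - H (z-1) with hDdef
  have hderiv : ∀ z : ℝ, HasDerivAt f (D z) z := by
    intro z
    have h2 : HasDerivAt (fun w : ℝ => w - 1) 1 z := (hasDerivAt_id z).sub_const 1
    have h1 : HasDerivAt (fun w => F w - F (w-1)) (H z - H (z-1)) z := by
      refine (hF z).sub ?_
      simpa [Function.comp_def] using (hF (z-1)).comp z h2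
    have h3 : (fun w => F w - F (w-1)) = f := funext fun w => (hfF w).symm
    rw [h3] at h1
    exact h1
  have hdf : deriv f = D := funext fun z => (hderiv z).deriv
  -- properties of D
  have hDint' : ∀ z : ℝ, D z = ∫ t in (z-1)..z, G t := fun z => hHsub (z-1) z
  have hD0 : ∀ z : ℝ, 0 ≤ D z := by
    intro z
    rw [hDint' z]
    apply intervalIntegral.integral_nonneg (by linarith)
    intro u _
    exact hGpos u
  have hHnn : ∀ x : ℝ, 0 ≤ H x := by
    intro x
    rw [hHdef]
    exact setIntegral_nonneg measurableSet_Iic (fun t _ => hGpos t)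
  have hHle1 : ∀ x : ℝ, H x ≤ 1 := by
    intro x
    rw [hHdef, ← hGint]
    exact setIntegral_le_integral hGi (Filter.Eventually.of_forall hGpos)
  have hD1 : ∀ z : ℝ, D z ≤ 1 := by
    intro z
    rw [hDdef]
    simp only
    linarith [hHle1 z, hHnn (z-1)]
  have hDcont : Continuous D := hHcont.sub (hHcont.comp (continuous_id.sub continuous_const))
  have hDsupp : ∀ z : ℝ, z ∉ Set.Icc (-ε) (1+ε) → D z = 0 := by
    intro z hz
    simp only [Set.mem_Icc, not_and_or, not_le] at hz
    rw [hDdef]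
    simp only
    rcases hz with h | h
    · rw [hH0 z (le_of_lt h), hH0 (z-1) (by linarith)]
      ring
    · rw [hH1 z (by linarith), hH1 (z-1) (by linarith)]
      ring
  have hDone : ∀ z ∈ Set.Icc ε (1-ε), D z = 1 := by
    intro z hz
    rw [hDdef]
    simp only
    rw [hH1 z hz.1, hH0 (z-1) (by linarith [hz.2])]
    ring
  have hDK : HasCompactSupport D := HasCompactSupport.intro isCompact_Icc hDsupp
  have hiD : Integrable D := hDcont.integrable_of_hasCompactSupport hDK
  have hiD2 : Integrable (fun z => D z ^ 2) := by
    apply Continuous.integrable_of_hasCompactSupport (by fun_prop)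
    apply HasCompactSupport.intro isCompact_Icc (K := Set.Icc (-ε) (1+ε))
    intro z hz
    rw [hDsupp z hz]
    ring
  have hiI : Integrable (fun z => D z ^ 2 * (1 - (1-ε) * D z)) := by
    apply Continuous.integrable_of_hasCompactSupport (by fun_prop)
    apply HasCompactSupport.intro isCompact_Icc (K := Set.Icc (-ε) (1+ε))
    intro z hz
    rw [hDsupp z hz]
    ring
  have hiJ : Integrable (fun z => D z - (1-ε) * D z ^ 2) := hiD.sub (hiD2.const_mul _)
  -- ∫ D = 1
  have hf2 : f 2 = 1 := by
    rw [hf 2]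
    have h1 : ∀ y : ℝ, max 0 (min 1 y) * G (2 - y) = G (2 - y) := by
      intro y
      rcases le_or_gt 1 y with h | h
      · rw [min_eq_left (by linarith), max_eq_right zero_le_one, one_mul]
      · rw [hGz (2 - y) (by simp only [Set.mem_Icc, not_and_or, not_le]; right; linarith)]
        ring
    rw [integral_congr_ae (Filter.Eventually.of_forall h1)]
    rw [integral_sub_left_eq_self G volume 2]
    exact hGint
  have hfneg : f (-1-ε) = 0 := by
    rw [hf (-1-ε)]
    have h1 : ∀ y : ℝ, max 0 (min 1 y) * G (-1-ε - y) = 0 := by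
      intro y
      rcases le_or_gt y 0 with h | h
      · rw [min_eq_right (by linarith), max_eq_left h]
        ring
      · rw [hGz (-1-ε - y) (by simp only [Set.mem_Icc, not_and_or, not_le]; left; linarith)]
        ring
    rw [integral_congr_ae (Filter.Eventually.of_forall h1)]
    simp
  have hDtotal : ∫ z, D z = 1 := by
    have h1 : ∫ z, D z = ∫ z in Set.Ioc (-1-ε) 2, D z := by
      refine (setIntegral_eq_integral_of_forall_compl_eq_zero (fun z hz => ?_)).symm
      apply hDsupp
      simp only [Set.mem_Ioc, not_and_or, not_lt, not_le] at hz
      simp only [Set.mem_Icc, not_and_or, not_le]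
      rcases hz with h | h
      · left; linarith
      · right; linarith
    have h2 : ∫ z in Set.Ioc (-1-ε) 2, D z = ∫ z in (-1-ε)..2, D z :=
      (intervalIntegral.integral_of_le (by linarith)).symm
    have h3 : ∫ z in (-1-ε)..2, D z = f 2 - f (-1-ε) :=
      intervalIntegral.integral_eq_sub_of_hasDerivAt (fun x _ => hderiv x)
        (hDcont.intervalIntegrable (μ := volume) _ _)
    rw [h1, h2, h3, hf2, hfneg]
    ring
  -- main bound
  have hptwise : ∀ z : ℝ, D z ^ 2 * (1 - (1-ε) * D z) ≤ D z - (1-ε) * D z ^ 2 := by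
    intro z
    have h1 : 0 ≤ 1 - (1-ε) * D z := by
      nlinarith [hD0 z, hD1 z]
    nlinarith [mul_nonneg (mul_nonneg (hD0 z) (sub_nonneg.mpr (hD1 z))) h1]
  have hle : ∫ z : ℝ, D z ^ 2 * (1 - (1-ε) * D z) ≤ 1 - (1-ε) * ∫ z : ℝ, D z ^ 2 := by
    calc ∫ z : ℝ, D z ^ 2 * (1 - (1-ε) * D z) ≤ ∫ z : ℝ, (D z - (1-ε) * D z ^ 2) :=
          integral_mono hiI hiJ hptwise
      _ = (∫ z : ℝ, D z) - (1-ε) * ∫ z : ℝ, D z ^ 2 := by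
          rw [integral_sub hiD (hiD2.const_mul _), integral_const_mul]
      _ = 1 - (1-ε) * ∫ z : ℝ, D z ^ 2 := by rw [hDtotal]
  have hgoal : ∫ z : ℝ, (deriv f z)^2 * (1 - (1 - ε) * deriv f z)
      = ∫ z : ℝ, D z ^ 2 * (1 - (1-ε) * D z) := by
    rw [hdf]
  rw [hgoal]
  rcases le_or_gt (1/3 : ℝ) ε with h3 | h3
  · have h4 : 0 ≤ ∫ z : ℝ, D z ^ 2 := integral_nonneg fun z => sq_nonneg _
    nlinarith [mul_nonneg (by linarith : (0:ℝ) ≤ 1 - ε) h4]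
  · have hQ : 1 - 2*ε ≤ ∫ z : ℝ, D z ^ 2 := by
      have e1 : ∫ z in Set.Icc ε (1-ε), D z ^ 2 = 1 - 2*ε := by
        rw [setIntegral_congr_fun measurableSet_Icc (g := fun _ => (1:ℝ))
          (fun z hz => by rw [hDone z hz]; norm_num)]
        rw [setIntegral_const, measureReal_def, Real.volume_Icc, smul_eq_mul,
          ENNReal.toReal_ofReal (by linarith)]
        ring
      calc 1 - 2*ε = ∫ z in Set.Icc ε (1-ε), D z ^ 2 := e1.symm
        _ ≤ ∫ z : ℝ, D z ^ 2 :=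
            setIntegral_le_integral hiD2 (Filter.Eventually.of_forall fun z => sq_nonneg _)
    nlinarith [mul_le_mul_of_nonneg_left hQ (by linarith : (0:ℝ) ≤ 1 - ε)]
end

section
/- Let V be a finite-dimensional real inner product space and let Q be a positive semi-definite symmetric bilinear form on V. Define on V × V the quadratic expression Q̃(a∧b) := ‖a‖² Q(b,b) - 2⟨a,b⟩ Q(a,b) + ‖b‖² Q(a,a). Then Q̃(a∧b) ≥ 0 for all a, b ∈ V, and Q̃(a∧b) depends only on the exterior product a∧b (i.e., Q̃(a∧b) = Q̃(a'∧b') whenever a∧b = a'∧b' in Λ²V). -/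
/-!
The polarization `Q̃(a, b, c, d) = ⟨a,c⟩Q(b,d) - ⟨a,d⟩Q(b,c) + ⟨b,d⟩Q(a,c) - ⟨b,c⟩Q(a,d)` is
the Kulkarni–Nomizu product of the inner product with `Q`. For fixed `(a, b)` it is an alternating
bilinear form in `(c, d)`, hence factors through `c ∧ d`; since it is also symmetric under
exchanging the pairs, its diagonal `Q̃(a, b, a, b)` factors through `a ∧ b` as well.
Nonnegativity is Cauchy–Schwarz for both forms followed by AM–GM:
`|⟨a,b⟩ Q(a,b)| ≤ √(‖a‖²Q(b,b) · ‖b‖²Q(a,a)) ≤ (‖a‖²Q(b,b) + ‖b‖²Q(a,a)) / 2`.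
-/

open scoped RealInnerProductSpace

namespace LinearMap

variable {R M N : Type*} [CommRing R] [AddCommGroup M] [Module R M] [AddCommGroup N] [Module R N]

def IsAlt.toAlternatingMap {B : M →ₗ[R] M →ₗ[R] N} (hB : B.IsAlt) : M [⋀^Fin 2]→ₗ[R] N where
  toFun v := B (v 0) (v 1)
  map_update_add' v i x y := by fin_cases i <;> simp
  map_update_smul' v i c x := by fin_cases i <;> simp
  map_eq_zero_of_eq' v i j hij hne := by
    fin_cases i <;> fin_cases j <;> simp_all [hB.self_eq_zero]

theorem IsAlt.apply_eq_of_ι_mul_ι_eq {B : M →ₗ[R] M →ₗ[R] N} (hB : B.IsAlt) {a b c d : M}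
    (h : ExteriorAlgebra.ι R a * ExteriorAlgebra.ι R b
      = ExteriorAlgebra.ι R c * ExteriorAlgebra.ι R d) :
    B a b = B c d := by
  let L := ExteriorAlgebra.liftAlternating (R := R) (M := M) (N := N)
    (Pi.single 2 hB.toAlternatingMap)
  have hL (x y : M) : L (ExteriorAlgebra.ι R x * ExteriorAlgebra.ι R y) = B x y := by
    have hι :
        ExteriorAlgebra.ι R x * ExteriorAlgebra.ι R y = ExteriorAlgebra.ιMulti R 2 ![x, y] := by
      simp [ExteriorAlgebra.ιMulti_apply]
    rw [hι, ExteriorAlgebra.liftAlternating_apply_ιMulti, Pi.single_eq_same]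
    rfl
  rw [← hL, h, hL]

end LinearMap

open LinearMap (BilinForm)

namespace LinearMap.BilinForm

variable {R M : Type*} [CommRing R] [AddCommGroup M] [Module R M]

variable (P Q : BilinForm R M)

/-- `kulkarniNomizu P Q a b c d` is the Kulkarni–Nomizu product `(P ⊙ Q)(a, b, c, d)`, curried so
that fixing the first pair gives a bilinear form in the second. -/
def kulkarniNomizu (a b : M) : BilinForm R M :=
  linMulLin (P a) (Q b) - (linMulLin (P a) (Q b)).flip
    + linMulLin (Q a) (P b) - (linMulLin (Q a) (P b)).flip

theorem kulkarniNomizu_apply (a b c d : M) :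
    kulkarniNomizu P Q a b c d = P a c * Q b d - P a d * Q b c + P b d * Q a c - P b c * Q a d := by
  simp only [kulkarniNomizu, add_apply, sub_apply, flip_apply, linMulLin_apply]
  ring

theorem isAlt_kulkarniNomizu (a b : M) : (kulkarniNomizu P Q a b).IsAlt := fun v => by
  rw [kulkarniNomizu_apply]
  ring

variable {P Q}

theorem kulkarniNomizu_comm (hP : P.IsSymm) (hQ : Q.IsSymm) (a b c d : M) :
    kulkarniNomizu P Q a b c d = kulkarniNomizu P Q c d a b := by
  simp only [kulkarniNomizu_apply, hP.eq a, hP.eq b, hQ.eq a, hQ.eq b]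
  ring

theorem kulkarniNomizu_self (hP : P.IsSymm) (hQ : Q.IsSymm) (a b : M) :
    kulkarniNomizu P Q a b a b = P a a * Q b b - 2 * P a b * Q a b + P b b * Q a a := by
  rw [kulkarniNomizu_apply, hP.eq b a, hQ.eq b a]
  ring

theorem kulkarniNomizu_self_eq_of_ι_mul_ι_eq (hP : P.IsSymm) (hQ : Q.IsSymm) {a b a' b' : M}
    (h : ExteriorAlgebra.ι R a * ExteriorAlgebra.ι R b
      = ExteriorAlgebra.ι R a' * ExteriorAlgebra.ι R b') :
    kulkarniNomizu P Q a b a b = kulkarniNomizu P Q a' b' a' b' :=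
  calc kulkarniNomizu P Q a b a b
      = kulkarniNomizu P Q a b a' b' := (isAlt_kulkarniNomizu P Q a b).apply_eq_of_ι_mul_ι_eq h
    _ = kulkarniNomizu P Q a' b' a b := kulkarniNomizu_comm hP hQ a b a' b'
    _ = kulkarniNomizu P Q a' b' a' b' :=
      (isAlt_kulkarniNomizu P Q a' b').apply_eq_of_ι_mul_ι_eq h

section Ordered

variable [LinearOrder R] [IsStrictOrderedRing R]

theorem kulkarniNomizu_self_nonneg (hP : P.IsPosSemidef) (hQ : Q.IsPosSemidef) (a b : M) :
    0 ≤ kulkarniNomizu P Q a b a b := by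
  have hPa := hP.nonneg a
  have hPb := hP.nonneg b
  have hQa := hQ.nonneg a
  have hQb := hQ.nonneg b
  have hcs : (P a b * Q a b) ^ 2 ≤ (P a a * Q b b) * (P b b * Q a a) := by
    rw [mul_pow]
    calc P a b ^ 2 * Q a b ^ 2 ≤ (P a a * P b b) * (Q a a * Q b b) :=
          mul_le_mul (P.apply_sq_le_of_symm hP.nonneg (isSymm_iff.1 hP.isSymm) a b)
            (Q.apply_sq_le_of_symm hQ.nonneg (isSymm_iff.1 hQ.isSymm) a b) (sq_nonneg _)
            (mul_nonneg hPa hPb)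
      _ = (P a a * Q b b) * (P b b * Q a a) := by ring
  rw [kulkarniNomizu_self hP.isSymm hQ.isSymm]
  nlinarith [mul_nonneg hPa hQb, mul_nonneg hPb hQa,
    sq_nonneg (P a a * Q b b - P b b * Q a a)]

end Ordered

end LinearMap.BilinForm

open LinearMap.BilinForm in
theorem wedge_quadratic_form_nonneg_and_welldefined_general
    (V : Type*) [NormedAddCommGroup V] [InnerProductSpace ℝ V]
    (Q : V →ₗ[ℝ] V →ₗ[ℝ] ℝ)
    (hsymm : ∀ v w, Q v w = Q w v)
    (hpsd : ∀ v, 0 ≤ Q v v) :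
    (∀ a b : V,
      0 ≤ ‖a‖^2 * Q b b - 2 * ⟪a, b⟫ * Q a b + ‖b‖^2 * Q a a) ∧
    (∀ a b a' b' : V,
      (ExteriorAlgebra.ι ℝ a) * (ExteriorAlgebra.ι ℝ b)
        = (ExteriorAlgebra.ι ℝ a') * (ExteriorAlgebra.ι ℝ b') →
      ‖a‖^2 * Q b b - 2 * ⟪a, b⟫ * Q a b + ‖b‖^2 * Q a a
        = ‖a'‖^2 * Q b' b' - 2 * ⟪a', b'⟫ * Q a' b' + ‖b'‖^2 * Q a' a') := by
  have hinner : BilinForm.IsPosSemidef (innerₗ V) := isPosSemidef_iff.2 isPosSemidef_inner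
  have hQ : BilinForm.IsPosSemidef Q := ⟨⟨hsymm⟩, ⟨hpsd⟩⟩
  have hdiag (a b : V) : ‖a‖^2 * Q b b - 2 * ⟪a, b⟫ * Q a b + ‖b‖^2 * Q a a
      = kulkarniNomizu (innerₗ V) Q a b a b := by
    rw [kulkarniNomizu_self hinner.isSymm hQ.isSymm]
    simp only [innerₗ_apply_apply, real_inner_self_eq_norm_sq]
  refine ⟨fun a b => ?_, fun a b a' b' h => ?_⟩
  · rw [hdiag]
    exact kulkarniNomizu_self_nonneg hinner hQ a b
  · rw [hdiag, hdiag]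
    exact kulkarniNomizu_self_eq_of_ι_mul_ι_eq hinner.isSymm hQ.isSymm h

/-- For a positive semi-definite symmetric bilinear form `Q` on a finite-dimensional
real inner product space, the quantity
`Q̃(a∧b) = ‖a‖²Q(b,b) - 2⟨a,b⟩Q(a,b) + ‖b‖²Q(a,a)` is nonnegative and depends
only on the exterior product `a ∧ b` (taken in the exterior algebra). -/
theorem wedge_quadratic_form_nonneg_and_welldefined
    (V : Type*) [NormedAddCommGroup V] [InnerProductSpace ℝ V] [FiniteDimensional ℝ V]
    (Q : V →ₗ[ℝ] V →ₗ[ℝ] ℝ)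
    (hsymm : ∀ v w, Q v w = Q w v)
    (hpsd : ∀ v, 0 ≤ Q v v) :
    (∀ a b : V,
      0 ≤ ‖a‖^2 * Q b b - 2 * ⟪a, b⟫ * Q a b + ‖b‖^2 * Q a a) ∧
    (∀ a b a' b' : V,
      (ExteriorAlgebra.ι ℝ a) * (ExteriorAlgebra.ι ℝ b)
        = (ExteriorAlgebra.ι ℝ a') * (ExteriorAlgebra.ι ℝ b') →
      ‖a‖^2 * Q b b - 2 * ⟪a, b⟫ * Q a b + ‖b‖^2 * Q a a
        = ‖a'‖^2 * Q b' b' - 2 * ⟪a', b'⟫ * Q a' b' + ‖b'‖^2 * Q a' a') :=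
  wedge_quadratic_form_nonneg_and_welldefined_general V Q hsymm hpsd
end

section
/- On the group Diff(S¹) with Lie algebra X(S¹) of smooth vector fields (bracket ad(X)Y = X'Y - XY') and right-invariant L²-metric G⁰(X,Y) = ∫_{S¹} X·Y dx, the adjoint of ad is ad(X)* Y = 2X'Y + XY'. Consequently the Arnold curvature expression gives G⁰(R(X,Y)X, Y) = -∫_{S¹} (X'Y - XY')² dx ≤ 0, so all sectional curvatures of the right-invariant L²-metric are non-negative. -/
open intervalIntegral

/-- On `X(S¹)` (smooth `2π`-periodic functions) with `ad(X)Y = X'Y - XY'` and the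
`L²` metric, the adjoint of `ad(X)` is `Y ↦ 2X'Y + XY'`, and Arnold's formula
`4G(R(X,Y)X,Y) = 3G(adXY,adXY) - 2G(ad*Y X, adXY) - 2G(ad*X Y, adYX)`
`+ 4G(ad*X X, ad*Y Y) - G(ad*X Y + ad*Y X, ad*X Y + ad*Y X)`
evaluates to `-4∫(X'Y - XY')² ≤ 0`, so all sectional curvatures are
non-negative. -/
theorem circle_L2_adjoint_and_curvature
    (X Y : ℝ → ℝ) (hX : ContDiff ℝ (⊤ : ℕ∞) X) (hY : ContDiff ℝ (⊤ : ℕ∞) Y)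
    (hXp : Function.Periodic X (2 * Real.pi))
    (hYp : Function.Periodic Y (2 * Real.pi)) :
    (∀ Z : ℝ → ℝ, ContDiff ℝ (⊤ : ℕ∞) Z → Function.Periodic Z (2 * Real.pi) →
      ∫ x in (0:ℝ)..(2 * Real.pi),
          (2 * deriv X x * Y x + X x * deriv Y x) * Z x
        = ∫ x in (0:ℝ)..(2 * Real.pi),
            Y x * (deriv X x * Z x - X x * deriv Z x)) ∧
    (3 * ∫ x in (0:ℝ)..(2 * Real.pi),
          (deriv X x * Y x - X x * deriv Y x)^2)
      - (2 * ∫ x in (0:ℝ)..(2 * Real.pi),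
          (2 * deriv Y x * X x + Y x * deriv X x) *
            (deriv X x * Y x - X x * deriv Y x))
      - (2 * ∫ x in (0:ℝ)..(2 * Real.pi),
          (2 * deriv X x * Y x + X x * deriv Y x) *
            (deriv Y x * X x - Y x * deriv X x))
      + (4 * ∫ x in (0:ℝ)..(2 * Real.pi),
          (2 * deriv X x * X x + X x * deriv X x) *
            (2 * deriv Y x * Y x + Y x * deriv Y x))
      - (∫ x in (0:ℝ)..(2 * Real.pi),
          ((2 * deriv X x * Y x + X x * deriv Y x)
            + (2 * deriv Y x * X x + Y x * deriv X x))^2)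
    = 4 * (-(∫ x in (0:ℝ)..(2 * Real.pi),
          (deriv X x * Y x - X x * deriv Y x)^2)) := by
  have cX := hX.continuous
  have cY := hY.continuous
  have cX' : Continuous (deriv X) := hX.continuous_deriv (by simp)
  have cY' : Continuous (deriv Y) := hY.continuous_deriv (by simp)
  constructor
  · intro Z hZ hZp
    have cZ := hZ.continuous
    have cZ' : Continuous (deriv Z) := hZ.continuous_deriv (by simp)
    have dX := hX.differentiable (by simp)
    have dY := hY.differentiable (by simp)
    have dZ := hZ.differentiable (by simp)
    set F' : ℝ → ℝ := fun x =>
      (deriv X x * Y x + X x * deriv Y x) * Z x + X x * Y x * deriv Z x with hF'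
    have key : (∫ x in (0:ℝ)..(2 * Real.pi), F' x) = 0 := by
      rw [intervalIntegral.integral_eq_sub_of_hasDerivAt
          (f := fun x => X x * Y x * Z x) (f' := F')
          (fun x _ => (((dX x).hasDerivAt.mul (dY x).hasDerivAt).mul
            (dZ x).hasDerivAt))
          (Continuous.intervalIntegrable (by fun_prop) _ _)]
      have h1 : X (2 * Real.pi) = X 0 := by simpa using hXp 0
      have h2 : Y (2 * Real.pi) = Y 0 := by simpa using hYp 0
      have h3 : Z (2 * Real.pi) = Z 0 := by simpa using hZp 0
      rw [h1, h2, h3]; ring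
    have congr1 : (∫ x in (0:ℝ)..(2 * Real.pi),
        (2 * deriv X x * Y x + X x * deriv Y x) * Z x)
        = ∫ x in (0:ℝ)..(2 * Real.pi),
          (Y x * (deriv X x * Z x - X x * deriv Z x) + F' x) := by
      apply intervalIntegral.integral_congr
      intro x _
      simp only [hF']
      ring
    rw [congr1, intervalIntegral.integral_add
      (Continuous.intervalIntegrable (by fun_prop) _ _)
      (Continuous.intervalIntegrable (by fun_prop) _ _), key, add_zero]
  · have i1 : IntervalIntegrable (fun x =>
        (deriv X x * Y x - X x * deriv Y x)^2) MeasureTheory.volume 0 (2 * Real.pi) :=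
      Continuous.intervalIntegrable (by fun_prop) _ _
    have i2 : IntervalIntegrable (fun x =>
        (2 * deriv Y x * X x + Y x * deriv X x) *
          (deriv X x * Y x - X x * deriv Y x)) MeasureTheory.volume 0 (2 * Real.pi) :=
      Continuous.intervalIntegrable (by fun_prop) _ _
    have i3 : IntervalIntegrable (fun x =>
        (2 * deriv X x * Y x + X x * deriv Y x) *
          (deriv Y x * X x - Y x * deriv X x)) MeasureTheory.volume 0 (2 * Real.pi) :=
      Continuous.intervalIntegrable (by fun_prop) _ _
    have i4 : IntervalIntegrable (fun x =>
        (2 * deriv X x * X x + X x * deriv X x) *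
          (2 * deriv Y x * Y x + Y x * deriv Y x)) MeasureTheory.volume 0 (2 * Real.pi) :=
      Continuous.intervalIntegrable (by fun_prop) _ _
    have i5 : IntervalIntegrable (fun x =>
        ((2 * deriv X x * Y x + X x * deriv Y x)
          + (2 * deriv Y x * X x + Y x * deriv X x))^2) MeasureTheory.volume 0 (2 * Real.pi) :=
      Continuous.intervalIntegrable (by fun_prop) _ _
    rw [← intervalIntegral.integral_const_mul 3, ← intervalIntegral.integral_const_mul 2,
      ← intervalIntegral.integral_const_mul 2 (fun x =>
        (2 * deriv X x * Y x + X x * deriv Y x) * (deriv Y x * X x - Y x * deriv X x)),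
      ← intervalIntegral.integral_const_mul 4,
      ← intervalIntegral.integral_sub (i1.const_mul 3) (i2.const_mul 2),
      ← intervalIntegral.integral_sub ((i1.const_mul 3).sub (i2.const_mul 2)) (i3.const_mul 2),
      ← intervalIntegral.integral_add
        (((i1.const_mul 3).sub (i2.const_mul 2)).sub (i3.const_mul 2)) (i4.const_mul 4),
      ← intervalIntegral.integral_sub
        ((((i1.const_mul 3).sub (i2.const_mul 2)).sub (i3.const_mul 2)).add (i4.const_mul 4)) i5]
    have congr2 : (∫ x in (0:ℝ)..(2 * Real.pi),
        (3 * (deriv X x * Y x - X x * deriv Y x)^2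
          - 2 * ((2 * deriv Y x * X x + Y x * deriv X x) *
              (deriv X x * Y x - X x * deriv Y x))
          - 2 * ((2 * deriv X x * Y x + X x * deriv Y x) *
              (deriv Y x * X x - Y x * deriv X x))
          + 4 * ((2 * deriv X x * X x + X x * deriv X x) *
              (2 * deriv Y x * Y x + Y x * deriv Y x))
          - ((2 * deriv X x * Y x + X x * deriv Y x)
              + (2 * deriv Y x * X x + Y x * deriv X x))^2))
        = ∫ x in (0:ℝ)..(2 * Real.pi),
            (-4) * (deriv X x * Y x - X x * deriv Y x)^2 := by
      apply intervalIntegral.integral_congr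
      intro x _
      ring
    rw [congr2, intervalIntegral.integral_const_mul]
    ring
end

section
/- On X(S¹) with the H¹-type inner product G^A(X,Y) = ∫_{S¹}(XY + A X'Y') dx, A > 0, the adjoint of ad(X)Y = X'Y - XY' is ad(X)*Y = (1 - A∂_x²)⁻¹(2YX' + Y'X - 2A Y''X' - A Y'''X); equivalently, for all smooth Z, ∫_{S¹}(W Z + A W' Z') dx = ∫_{S¹}(Y(X'Z - XZ') + A Y'(X'Z - XZ')') dx where W = ad(X)*Y, and W satisfies W - A W'' = 2YX' + Y'X - 2A Y''X' - A Y'''X. -/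
open intervalIntegral

/-- The `G^A`-adjoint of `ad(X)` on `X(S¹)`: if `W` is smooth `2π`-periodic with
`W - A W'' = 2YX' + Y'X - 2AY''X' - AY'''X`, then for all smooth periodic `Z`,
`∫ (WZ + AW'Z') = ∫ (Y(X'Z - XZ') + AY'(X'Z - XZ')')`, i.e.
`G^A(W, Z) = G^A(Y, ad(X)Z)`, so `W = ad(X)*Y = (1-A∂ₓ²)⁻¹(2YX'+Y'X-2AY''X'-AY'''X)`. -/
theorem circle_GA_adjoint
    (A : ℝ) (hA : 0 < A)
    (X Y W : ℝ → ℝ)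
    (hX : ContDiff ℝ (⊤ : ℕ∞) X) (hY : ContDiff ℝ (⊤ : ℕ∞) Y) (hW : ContDiff ℝ (⊤ : ℕ∞) W)
    (hXp : Function.Periodic X (2 * Real.pi))
    (hYp : Function.Periodic Y (2 * Real.pi))
    (hWp : Function.Periodic W (2 * Real.pi))
    (hWeq : ∀ x, W x - A * iteratedDeriv 2 W x
      = 2 * Y x * deriv X x + deriv Y x * X x
        - 2 * A * iteratedDeriv 2 Y x * deriv X x
        - A * iteratedDeriv 3 Y x * X x) :
    ∀ Z : ℝ → ℝ, ContDiff ℝ (⊤ : ℕ∞) Z → Function.Periodic Z (2 * Real.pi) →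
      ∫ x in (0:ℝ)..(2 * Real.pi), (W x * Z x + A * deriv W x * deriv Z x)
        = ∫ x in (0:ℝ)..(2 * Real.pi),
            (Y x * (deriv X x * Z x - X x * deriv Z x)
              + A * deriv Y x *
                  deriv (fun y => deriv X y * Z y - X y * deriv Z y) x) := by
  intro Z hZ hZp
  have step : ∀ f : ℝ → ℝ, ContDiff ℝ (⊤ : ℕ∞) f → ContDiff ℝ (⊤ : ℕ∞) (deriv f) := fun f hf =>
    (contDiff_succ_iff_deriv.mp
      (by rw [show (((⊤:ℕ∞):WithTop ℕ∞) + 1) = ((⊤:ℕ∞):WithTop ℕ∞) from rfl]; exact hf)).2.2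
  have cX1 : ContDiff ℝ (⊤ : ℕ∞) (deriv X) := step _ hX
  have cX2 : ContDiff ℝ (⊤ : ℕ∞) (deriv (deriv X)) := step _ cX1
  have cY1 : ContDiff ℝ (⊤ : ℕ∞) (deriv Y) := step _ hY
  have cY2 : ContDiff ℝ (⊤ : ℕ∞) (deriv (deriv Y)) := step _ cY1
  have cY3 : ContDiff ℝ (⊤ : ℕ∞) (deriv (deriv (deriv Y))) := step _ cY2
  have cW1 : ContDiff ℝ (⊤ : ℕ∞) (deriv W) := step _ hW
  have cW2 : ContDiff ℝ (⊤ : ℕ∞) (deriv (deriv W)) := step _ cW1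
  have cZ1 : ContDiff ℝ (⊤ : ℕ∞) (deriv Z) := step _ hZ
  have cZ2 : ContDiff ℝ (⊤ : ℕ∞) (deriv (deriv Z)) := step _ cZ1
  have dd : ∀ f : ℝ → ℝ, ContDiff ℝ (⊤ : ℕ∞) f → ∀ x, HasDerivAt f (deriv f x) x :=
    fun f hf x => (hf.differentiable (by simp) x).hasDerivAt
  have hWeq' : ∀ x, W x - A * deriv (deriv W) x
      = 2 * Y x * deriv X x + deriv Y x * X x
        - 2 * A * deriv (deriv Y) x * deriv X x
        - A * deriv (deriv (deriv Y)) x * X x := by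
    intro x
    have := hWeq x
    simpa [iteratedDeriv_succ, iteratedDeriv_one] using this
  -- the derivative of the inner function
  have hgHas : ∀ x, HasDerivAt (fun y => deriv X y * Z y - X y * deriv Z y)
      (deriv (deriv X) x * Z x + deriv X x * deriv Z x
        - (deriv X x * deriv Z x + X x * deriv (deriv Z) x)) x :=
    fun x => ((dd _ cX1 x).mul (dd _ hZ x)).sub ((dd _ hX x).mul (dd _ cZ1 x))
  have hg : ∀ x, deriv (fun y => deriv X y * Z y - X y * deriv Z y) x
      = deriv (deriv X) x * Z x - X x * deriv (deriv Z) x := by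
    intro x
    rw [(hgHas x).deriv]; ring
  simp only [hg]
  -- the antiderivative of the difference of the two integrands
  set F : ℝ → ℝ := fun x => A * deriv W x * Z x
      - A * deriv Y x * (deriv X x * Z x - X x * deriv Z x)
      + (Y x - A * deriv (deriv Y) x) * X x * Z x with hFdef
  have hF : ∀ x, HasDerivAt F
      ((W x * Z x + A * deriv W x * deriv Z x)
        - (Y x * (deriv X x * Z x - X x * deriv Z x)
            + A * deriv Y x * (deriv (deriv X) x * Z x - X x * deriv (deriv Z) x))) x := by
    intro x
    have h : HasDerivAt F
        ((A * deriv (deriv W) x * Z x + A * deriv W x * deriv Z x)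
          - (A * deriv (deriv Y) x * (deriv X x * Z x - X x * deriv Z x)
              + A * deriv Y x * (deriv (deriv X) x * Z x + deriv X x * deriv Z x
                - (deriv X x * deriv Z x + X x * deriv (deriv Z) x)))
          + (((deriv Y x - A * deriv (deriv (deriv Y)) x) * X x
              + (Y x - A * deriv (deriv Y) x) * deriv X x) * Z x
            + (Y x - A * deriv (deriv Y) x) * X x * deriv Z x)) x := by
      exact ((((dd _ cW1 x).const_mul A).mul (dd _ hZ x)).sub
        (((dd _ cY1 x).const_mul A).mul (hgHas x))).add
        ((((dd _ hY x).sub ((dd _ cY2 x).const_mul A)).mul (dd _ hX x)).mul (dd _ hZ x))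
    convert h using 1
    linear_combination Z x * hWeq' x
  have contL : Continuous (fun x => W x * Z x + A * deriv W x * deriv Z x) :=
    (hW.continuous.mul hZ.continuous).add
      ((continuous_const.mul cW1.continuous).mul cZ1.continuous)
  have contR : Continuous (fun x => Y x * (deriv X x * Z x - X x * deriv Z x)
      + A * deriv Y x * (deriv (deriv X) x * Z x - X x * deriv (deriv Z) x)) :=
    (hY.continuous.mul ((cX1.continuous.mul hZ.continuous).sub
        (hX.continuous.mul cZ1.continuous))).add
      ((continuous_const.mul cY1.continuous).mul
        ((cX2.continuous.mul hZ.continuous).sub (hX.continuous.mul cZ2.continuous)))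
  have key : (∫ x in (0:ℝ)..(2 * Real.pi),
      ((W x * Z x + A * deriv W x * deriv Z x)
        - (Y x * (deriv X x * Z x - X x * deriv Z x)
            + A * deriv Y x * (deriv (deriv X) x * Z x - X x * deriv (deriv Z) x))))
      = F (2 * Real.pi) - F 0 :=
    intervalIntegral.integral_eq_sub_of_hasDerivAt (fun x _ => hF x)
      ((contL.sub contR).intervalIntegrable _ _)
  have pder : ∀ f : ℝ → ℝ, Function.Periodic f (2 * Real.pi) →
      Function.Periodic (deriv f) (2 * Real.pi) := by
    intro f hf x
    have h1 : (fun y => f (y + 2 * Real.pi)) = f := funext hf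
    rw [← deriv_comp_add_const, h1]
  have pW1 : deriv W (2 * Real.pi) = deriv W 0 := by simpa using pder W hWp 0
  have pY1 : deriv Y (2 * Real.pi) = deriv Y 0 := by simpa using pder Y hYp 0
  have pY2 : deriv (deriv Y) (2 * Real.pi) = deriv (deriv Y) 0 := by
    simpa using (pder _ (pder Y hYp)) 0
  have pX1 : deriv X (2 * Real.pi) = deriv X 0 := by simpa using pder X hXp 0
  have pZ1 : deriv Z (2 * Real.pi) = deriv Z 0 := by simpa using pder Z hZp 0
  have pX0 : X (2 * Real.pi) = X 0 := by simpa using hXp 0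
  have pY0 : Y (2 * Real.pi) = Y 0 := by simpa using hYp 0
  have pZ0 : Z (2 * Real.pi) = Z 0 := by simpa using hZp 0
  have hFper : F (2 * Real.pi) = F 0 := by
    simp only [hFdef, pW1, pY1, pY2, pX1, pZ1, pX0, pY0, pZ0]
  rw [hFper, sub_self] at key
  rw [intervalIntegral.integral_sub (contL.intervalIntegrable _ _)
    (contR.intervalIntegrable _ _)] at key
  linarith
end

section
/- Let ψ ∈ Diff_c(ℝⁿ) be a compactly supported diffeomorphism. Then there exist finite constants C₁ = sup_x ‖(Dψ(x))⁻¹‖² and C₂ = sup_x |det Dψ⁻¹(x)| such that for every smooth path φ(t,·) in Diff_c(ℝⁿ) from the identity with L²-energy E(φ) = ∫_0^1 ∫_{ℝⁿ} ‖φ_t(t, φ(t,·)⁻¹(x))‖² dx dt, the conjugated path ψ⁻¹∘φ(t,·)∘ψ satisfies E(ψ⁻¹∘φ∘ψ) ≤ C₁ C₂ E(φ). -/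
open MeasureTheory intervalIntegral
open Filter Function Set

set_option maxHeartbeats 2000000
set_option synthInstance.maxHeartbeats 1000000

private lemma bddAbove_range_of_eq_outside {X : Type*} [TopologicalSpace X]
    {u : X → ℝ} (hu : Continuous u) {L : Set X} (hL : IsCompact L) {c : ℝ}
    (h : ∀ x ∉ L, u x = c) : BddAbove (Set.range u) := by
  obtain ⟨M, hM⟩ := (hL.image hu).bddAbove
  refine ⟨max M c, ?_⟩
  rintro y ⟨x, rfl⟩
  by_cases hx : x ∈ L
  · exact le_max_of_le_left (hM ⟨x, hx, rfl⟩)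
  · rw [h x hx]; exact le_max_right _ _

private lemma joint_meas_inv {n : ℕ}
    (φ φinv : ℝ → EuclideanSpace ℝ (Fin n) → EuclideanSpace ℝ (Fin n))
    (hφm : Measurable fun p : ℝ × EuclideanSpace ℝ (Fin n) => φ p.1 p.2)
    (hφinv : ∀ t, Function.LeftInverse (φinv t) (φ t) ∧
      Function.RightInverse (φinv t) (φ t)) :
    Measurable fun p : ℝ × EuclideanSpace ℝ (Fin n) => φinv p.1 p.2 := by
  have hΦmeas : Measurable (fun p : ℝ × EuclideanSpace ℝ (Fin n) => (p.1, φ p.1 p.2)) :=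
    measurable_fst.prodMk hφm
  have hΦinj : Function.Injective
      (fun p : ℝ × EuclideanSpace ℝ (Fin n) => (p.1, φ p.1 p.2)) := by
    rintro ⟨t, x⟩ ⟨s, y⟩ h
    simp only [Prod.mk.injEq] at h ⊢
    obtain ⟨rfl, h2⟩ := h
    exact ⟨rfl, (hφinv t).1.injective h2⟩
  haveI hcs : MeasurableSpace.CountablySeparated (ℝ × EuclideanSpace ℝ (Fin n)) :=
    @MeasurableSpace.countablySeparated_of_separatesPoints _ _ inferInstance inferInstance
  have hΦemb : MeasurableEmbedding
      (fun p : ℝ × EuclideanSpace ℝ (Fin n) => (p.1, φ p.1 p.2)) :=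
    hΦmeas.measurableEmbedding hΦinj
  have hΨ : Measurable (fun p : ℝ × EuclideanSpace ℝ (Fin n) => (p.1, φinv p.1 p.2)) := by
    intro S hS
    have himg : (fun p : ℝ × EuclideanSpace ℝ (Fin n) => (p.1, φinv p.1 p.2)) ⁻¹' S
        = (fun p : ℝ × EuclideanSpace ℝ (Fin n) => (p.1, φ p.1 p.2)) '' S := by
      ext ⟨t, x⟩
      constructor
      · intro h
        refine ⟨(t, φinv t x), h, ?_⟩
        simp [(hφinv t).2 x]
      · rintro ⟨⟨s, y⟩, hy, heq⟩
        simp only [Prod.mk.injEq] at heq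
        obtain ⟨rfl, rfl⟩ := heq
        simpa [(hφinv s).1 y] using hy
    rw [himg]
    exact hΦemb.measurableSet_image' hS
  exact measurable_snd.comp hΨ

private lemma joint_meas_deriv {n : ℕ}
    (φ : ℝ → EuclideanSpace ℝ (Fin n) → EuclideanSpace ℝ (Fin n))
    (hφm : Measurable fun p : ℝ × EuclideanSpace ℝ (Fin n) => φ p.1 p.2)
    (φt : ℝ → EuclideanSpace ℝ (Fin n) → EuclideanSpace ℝ (Fin n))
    (hφt : ∀ x t, HasDerivAt (fun s => φ s x) (φt t x) t) :
    Measurable fun p : ℝ × EuclideanSpace ℝ (Fin n) => φt p.1 p.2 := by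
  have hU : ∀ k : ℕ, Measurable (fun p : ℝ × EuclideanSpace ℝ (Fin n) =>
      (((k : ℝ) + 1)) • (φ (p.1 + ((k : ℝ) + 1)⁻¹) p.2 - φ p.1 p.2)) := by
    intro k
    exact ((hφm.comp (((measurable_fst.add_const _)).prodMk measurable_snd)).sub hφm).const_smul ((k : ℝ) + 1)
  have htend : Tendsto (fun (k : ℕ) (p : ℝ × EuclideanSpace ℝ (Fin n)) =>
      (((k : ℝ) + 1)) • (φ (p.1 + ((k : ℝ) + 1)⁻¹) p.2 - φ p.1 p.2)) atTop
      (nhds (fun p : ℝ × EuclideanSpace ℝ (Fin n) => φt p.1 p.2)) := by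
    rw [tendsto_pi_nhds]
    intro p
    have h1 := (hφt p.2 p.1)
    rw [hasDerivAt_iff_tendsto_slope] at h1
    have hseq : Tendsto (fun k : ℕ => p.1 + ((k : ℝ) + 1)⁻¹) atTop
        (nhdsWithin p.1 {p.1}ᶜ) := by
      apply tendsto_nhdsWithin_of_tendsto_nhds_of_eventually_within
      · have h0 : Tendsto (fun k : ℕ => ((k : ℝ) + 1)⁻¹) atTop (nhds 0) :=
          (tendsto_natCast_atTop_atTop.atTop_add tendsto_const_nhds).inv_tendsto_atTop
        simpa using tendsto_const_nhds.add h0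
      · filter_upwards with k
        simp only [Set.mem_compl_iff, Set.mem_singleton_iff]
        have h2 : (0 : ℝ) < ((k : ℝ) + 1)⁻¹ := by positivity
        intro hc
        nlinarith [hc]
    have h3 := h1.comp hseq
    refine h3.congr ?_
    intro k
    show slope (fun s => φ s p.2) p.1 (p.1 + ((k : ℝ) + 1)⁻¹) = _
    rw [slope_def_module, add_sub_cancel_left, inv_inv]
  exact measurable_of_tendsto_metrizable hU htend
private lemma integral_comparison {X : Type*} [MeasurableSpace X] {μ : Measure X}
    {u v : X → ℝ} {c cl : ℝ} (hc : 0 ≤ c)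
    (hu : AEStronglyMeasurable u μ) (hv : AEStronglyMeasurable v μ)
    (hu0 : ∀ t, 0 ≤ u t) (hv0 : ∀ t, 0 ≤ v t)
    (huv : ∀ t, u t ≤ c * v t) (hvu : ∀ t, v t ≤ cl * u t) :
    (∫ t, u t ∂μ) ≤ c * ∫ t, v t ∂μ := by
  by_cases hvi : Integrable v μ
  · have h := integral_mono_of_nonneg (Filter.Eventually.of_forall hu0) (hvi.const_mul c)
      (Filter.Eventually.of_forall huv)
    rwa [MeasureTheory.integral_const_mul] at h
  · have hui : ¬ Integrable u μ := by
      intro hui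
      apply hvi
      refine Integrable.mono' (hui.const_mul cl) hv ?_
      exact Filter.Eventually.of_forall fun t => by
        rw [Real.norm_eq_abs, abs_of_nonneg (hv0 t)]; exact hvu t
    rw [integral_undef hui]
    exact mul_nonneg hc (integral_nonneg hv0)

private lemma interval_comparison {u v : ℝ → ℝ} {c cl : ℝ} (hc : 0 ≤ c)
    (hu : Measurable u) (hv : Measurable v)
    (hu0 : ∀ t, 0 ≤ u t) (hv0 : ∀ t, 0 ≤ v t)
    (huv : ∀ t, u t ≤ c * v t) (hvu : ∀ t, v t ≤ cl * u t) :
    (∫ t in (0:ℝ)..1, u t) ≤ c * ∫ t in (0:ℝ)..1, v t := by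
  by_cases hvi : IntervalIntegrable v volume 0 1
  · have hui : IntervalIntegrable u volume 0 1 := by
      rw [intervalIntegrable_iff] at hvi ⊢
      refine Integrable.mono' (hvi.const_mul c) hu.aestronglyMeasurable ?_
      refine Filter.Eventually.of_forall fun t => ?_
      rw [Real.norm_eq_abs, abs_of_nonneg (hu0 t)]
      exact huv t
    calc (∫ t in (0:ℝ)..1, u t) ≤ ∫ t in (0:ℝ)..1, c * v t :=
          intervalIntegral.integral_mono_on (by norm_num) hui (hvi.const_mul c)
            (fun t _ => huv t)
      _ = c * ∫ t in (0:ℝ)..1, v t := intervalIntegral.integral_const_mul c v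
  · have hui : ¬ IntervalIntegrable u volume 0 1 := by
      intro hui
      apply hvi
      rw [intervalIntegrable_iff] at hui ⊢
      refine Integrable.mono' (hui.const_mul cl) hv.aestronglyMeasurable ?_
      refine Filter.Eventually.of_forall fun t => ?_
      rw [Real.norm_eq_abs, abs_of_nonneg (hv0 t)]
      exact hvu t
    rw [intervalIntegral.integral_undef hui, intervalIntegral.integral_undef hvi, mul_zero]

/-- Conjugation distorts the `L²`-energy of a path of diffeomorphisms of `ℝⁿ` by
at most `C₁·C₂` where `C₁ = sup‖Dψ⁻¹‖²` and `C₂ = sup|det Dψ⁻¹|`. -/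
theorem conjugation_energy_estimate
    (n : ℕ)
    (ψ ψinv : EuclideanSpace ℝ (Fin n) → EuclideanSpace ℝ (Fin n))
    (hψ : ContDiff ℝ (⊤ : ℕ∞) ψ) (hψinv : ContDiff ℝ (⊤ : ℕ∞) ψinv)
    (hinv1 : Function.LeftInverse ψinv ψ) (hinv2 : Function.RightInverse ψinv ψ)
    (K : Set (EuclideanSpace ℝ (Fin n))) (hK : IsCompact K)
    (hid : ∀ x ∉ K, ψ x = x)
    (φ φinv : ℝ → EuclideanSpace ℝ (Fin n) → EuclideanSpace ℝ (Fin n))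
    (hφ : ∀ t, ContDiff ℝ (⊤ : ℕ∞) (φ t))
    (hφinv : ∀ t, Function.LeftInverse (φinv t) (φ t) ∧
      Function.RightInverse (φinv t) (φ t))
    (hφ0 : φ 0 = id)
    (φt : ℝ → EuclideanSpace ℝ (Fin n) → EuclideanSpace ℝ (Fin n))
    (hφt : ∀ x t, HasDerivAt (fun s => φ s x) (φt t x) t) :
    (∫ t in (0:ℝ)..1, ∫ x,
        ‖(fderiv ℝ ψinv (φ t (φinv t (ψ x)))) (φt t (φinv t (ψ x)))‖^2)
      ≤ (⨆ x, ‖fderiv ℝ ψinv x‖^2) *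
          (⨆ x, |LinearMap.det (fderiv ℝ ψinv x :
            EuclideanSpace ℝ (Fin n) →ₗ[ℝ] EuclideanSpace ℝ (Fin n))|) *
          (∫ t in (0:ℝ)..1, ∫ x, ‖φt t (φinv t x)‖^2) := by
  have hψd : Differentiable ℝ ψ := hψ.differentiable (by simp)
  have hψinvd : Differentiable ℝ ψinv := hψinv.differentiable (by simp)
  have hBcont : Continuous (fderiv ℝ ψinv) := hψinv.continuous_fderiv (by simp)
  have hAcont : Continuous (fderiv ℝ ψ) := hψ.continuous_fderiv (by simp)
  -- chain rule identity : Dψ(ψinv y) ∘ Dψinv(y) = id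
  have hcomp1 : ∀ y, (fderiv ℝ ψ (ψinv y)).comp (fderiv ℝ ψinv y)
      = ContinuousLinearMap.id ℝ (EuclideanSpace ℝ (Fin n)) := by
    intro y
    have h1 : HasFDerivAt (ψ ∘ ψinv) ((fderiv ℝ ψ (ψinv y)).comp (fderiv ℝ ψinv y)) y :=
      (hψd (ψinv y)).hasFDerivAt.comp y (hψinvd y).hasFDerivAt
    have h2 : ψ ∘ ψinv = id := funext fun z => hinv2 z
    rw [h2] at h1
    exact h1.unique (hasFDerivAt_id y)
  have happly : ∀ y v, fderiv ℝ ψ (ψinv y) (fderiv ℝ ψinv y v) = v := by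
    intro y v
    have h := congrArg (fun L : EuclideanSpace ℝ (Fin n) →L[ℝ] EuclideanSpace ℝ (Fin n) => L v)
      (hcomp1 y)
    simpa using h
  have hdet1 : ∀ y, LinearMap.det (fderiv ℝ ψ (ψinv y) :
        EuclideanSpace ℝ (Fin n) →ₗ[ℝ] EuclideanSpace ℝ (Fin n))
      * LinearMap.det (fderiv ℝ ψinv y :
        EuclideanSpace ℝ (Fin n) →ₗ[ℝ] EuclideanSpace ℝ (Fin n)) = 1 := by
    intro y
    have h := congrArg (fun L : EuclideanSpace ℝ (Fin n) →L[ℝ] EuclideanSpace ℝ (Fin n) =>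
      LinearMap.det (L : EuclideanSpace ℝ (Fin n) →ₗ[ℝ] EuclideanSpace ℝ (Fin n))) (hcomp1 y)
    simpa [ContinuousLinearMap.coe_comp, LinearMap.det_comp] using h
  -- ψinv is the identity outside the compact set ψ '' K
  have hLcomp : IsCompact (ψ '' K) := hK.image hψ.continuous
  have hψinv_id : ∀ y, y ∉ ψ '' K → ψinv y = y := by
    intro y hy
    have hx : ψinv y ∉ K := fun h => hy ⟨ψinv y, h, hinv2 y⟩
    exact (hid _ hx).symm.trans (hinv2 y)
  have hBid : ∀ y, y ∉ ψ '' K →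
      fderiv ℝ ψinv y = ContinuousLinearMap.id ℝ (EuclideanSpace ℝ (Fin n)) := by
    intro y hy
    have hev : ψinv =ᶠ[nhds y] id := by
      filter_upwards [hLcomp.isClosed.isOpen_compl.mem_nhds hy] with z hz
      exact hψinv_id z hz
    rw [hev.fderiv_eq, fderiv_id]
  have hAid : ∀ x, x ∉ K →
      fderiv ℝ ψ x = ContinuousLinearMap.id ℝ (EuclideanSpace ℝ (Fin n)) := by
    intro x hx
    have hev : ψ =ᶠ[nhds x] id := by
      filter_upwards [hK.isClosed.isOpen_compl.mem_nhds hx] with z hz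
      exact hid z hz
    rw [hev.fderiv_eq, fderiv_id]
  -- the two suprema are genuine bounds
  have hC1bdd : BddAbove (Set.range fun x => ‖fderiv ℝ ψinv x‖^2) :=
    bddAbove_range_of_eq_outside (hBcont.norm.pow 2) hLcomp
      (fun x hx => by rw [hBid x hx])
  have hc1le : ∀ y, ‖fderiv ℝ ψinv y‖^2 ≤ ⨆ x, ‖fderiv ℝ ψinv x‖^2 :=
    fun y => le_ciSup hC1bdd y
  have hc1n : (0:ℝ) ≤ ⨆ x, ‖fderiv ℝ ψinv x‖^2 :=
    Real.iSup_nonneg fun x => by positivity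
  have hdetcont : Continuous fun y => |LinearMap.det (fderiv ℝ ψinv y :
      EuclideanSpace ℝ (Fin n) →ₗ[ℝ] EuclideanSpace ℝ (Fin n))| :=
    (ContinuousLinearMap.continuous_det.comp hBcont).abs
  have hC2bdd : BddAbove (Set.range fun y => |LinearMap.det (fderiv ℝ ψinv y :
      EuclideanSpace ℝ (Fin n) →ₗ[ℝ] EuclideanSpace ℝ (Fin n))|) :=
    bddAbove_range_of_eq_outside hdetcont hLcomp (fun x hx => by rw [hBid x hx])
  have hc2le : ∀ y, |LinearMap.det (fderiv ℝ ψinv y :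
        EuclideanSpace ℝ (Fin n) →ₗ[ℝ] EuclideanSpace ℝ (Fin n))|
      ≤ ⨆ x, |LinearMap.det (fderiv ℝ ψinv x :
        EuclideanSpace ℝ (Fin n) →ₗ[ℝ] EuclideanSpace ℝ (Fin n))| :=
    fun y => le_ciSup hC2bdd y
  have hc2n : (0:ℝ) ≤ ⨆ x, |LinearMap.det (fderiv ℝ ψinv x :
      EuclideanSpace ℝ (Fin n) →ₗ[ℝ] EuclideanSpace ℝ (Fin n))| :=
    Real.iSup_nonneg fun x => abs_nonneg _
  -- bounds on the derivative of ψ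
  obtain ⟨M0, hM0⟩ := bddAbove_range_of_eq_outside hAcont.norm hK
    (c := ‖ContinuousLinearMap.id ℝ (EuclideanSpace ℝ (Fin n))‖)
    (fun x hx => by rw [hAid x hx])
  set M : ℝ := max M0 1 with hMdef
  have hM : ∀ x, ‖fderiv ℝ ψ x‖ ≤ M := fun x =>
    le_trans (hM0 ⟨x, rfl⟩) (le_max_left _ _)
  have hM1 : (1:ℝ) ≤ M := le_max_right _ _
  have hMn : (0:ℝ) ≤ M := zero_le_one.trans hM1
  have hdetAcont : Continuous fun x => |LinearMap.det (fderiv ℝ ψ x :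
      EuclideanSpace ℝ (Fin n) →ₗ[ℝ] EuclideanSpace ℝ (Fin n))| :=
    (ContinuousLinearMap.continuous_det.comp hAcont).abs
  obtain ⟨D0, hD0⟩ := bddAbove_range_of_eq_outside hdetAcont hK
    (c := |LinearMap.det ((ContinuousLinearMap.id ℝ (EuclideanSpace ℝ (Fin n))) :
      EuclideanSpace ℝ (Fin n) →ₗ[ℝ] EuclideanSpace ℝ (Fin n))|)
    (fun x hx => by rw [hAid x hx])
  set D : ℝ := max D0 1 with hDdef
  have hD : ∀ x, |LinearMap.det (fderiv ℝ ψ x :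
      EuclideanSpace ℝ (Fin n) →ₗ[ℝ] EuclideanSpace ℝ (Fin n))| ≤ D := fun x =>
    le_trans (hD0 ⟨x, rfl⟩) (le_max_left _ _)
  have hD1 : (1:ℝ) ≤ D := le_max_right _ _
  have hDn : (0:ℝ) ≤ D := zero_le_one.trans hD1
  have hMDn : (0:ℝ) ≤ M^2 * D := mul_nonneg (by positivity) hDn
  have hdetBlow : ∀ y, 1 ≤ D * |LinearMap.det (fderiv ℝ ψinv y :
      EuclideanSpace ℝ (Fin n) →ₗ[ℝ] EuclideanSpace ℝ (Fin n))| := by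
    intro y
    have h : |LinearMap.det (fderiv ℝ ψ (ψinv y) :
          EuclideanSpace ℝ (Fin n) →ₗ[ℝ] EuclideanSpace ℝ (Fin n))|
        * |LinearMap.det (fderiv ℝ ψinv y :
          EuclideanSpace ℝ (Fin n) →ₗ[ℝ] EuclideanSpace ℝ (Fin n))| = 1 := by
      rw [← abs_mul, hdet1 y, abs_one]
    calc (1:ℝ) = _ * _ := h.symm
      _ ≤ D * _ := mul_le_mul_of_nonneg_right (hD _) (abs_nonneg _)
  -- pointwise bounds
  have hpt_up : ∀ (t : ℝ) y,
      |LinearMap.det (fderiv ℝ ψinv y :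
        EuclideanSpace ℝ (Fin n) →ₗ[ℝ] EuclideanSpace ℝ (Fin n))|
        * ‖fderiv ℝ ψinv y (φt t (φinv t y))‖^2
      ≤ ((⨆ x, ‖fderiv ℝ ψinv x‖^2) * ⨆ x, |LinearMap.det (fderiv ℝ ψinv x :
          EuclideanSpace ℝ (Fin n) →ₗ[ℝ] EuclideanSpace ℝ (Fin n))|)
        * ‖φt t (φinv t y)‖^2 := by
    intro t y
    have h1 : ‖fderiv ℝ ψinv y (φt t (φinv t y))‖^2
        ≤ ‖fderiv ℝ ψinv y‖^2 * ‖φt t (φinv t y)‖^2 := by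
      rw [← mul_pow]
      exact pow_le_pow_left₀ (norm_nonneg _) ((fderiv ℝ ψinv y).le_opNorm _) 2
    have h2 : ‖fderiv ℝ ψinv y (φt t (φinv t y))‖^2
        ≤ (⨆ x, ‖fderiv ℝ ψinv x‖^2) * ‖φt t (φinv t y)‖^2 :=
      h1.trans (mul_le_mul_of_nonneg_right (hc1le y) (by positivity))
    calc |LinearMap.det (fderiv ℝ ψinv y :
          EuclideanSpace ℝ (Fin n) →ₗ[ℝ] EuclideanSpace ℝ (Fin n))|
          * ‖fderiv ℝ ψinv y (φt t (φinv t y))‖^2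
        ≤ (⨆ x, |LinearMap.det (fderiv ℝ ψinv x :
            EuclideanSpace ℝ (Fin n) →ₗ[ℝ] EuclideanSpace ℝ (Fin n))|)
          * ((⨆ x, ‖fderiv ℝ ψinv x‖^2) * ‖φt t (φinv t y)‖^2) := by
          exact mul_le_mul (hc2le y) h2 (by positivity) hc2n
      _ = ((⨆ x, ‖fderiv ℝ ψinv x‖^2) * ⨆ x, |LinearMap.det (fderiv ℝ ψinv x :
            EuclideanSpace ℝ (Fin n) →ₗ[ℝ] EuclideanSpace ℝ (Fin n))|)
          * ‖φt t (φinv t y)‖^2 := by ring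
  have hpt_low : ∀ (t : ℝ) y,
      ‖φt t (φinv t y)‖^2
      ≤ (M^2 * D) * (|LinearMap.det (fderiv ℝ ψinv y :
          EuclideanSpace ℝ (Fin n) →ₗ[ℝ] EuclideanSpace ℝ (Fin n))|
        * ‖fderiv ℝ ψinv y (φt t (φinv t y))‖^2) := by
    intro t y
    have h1 : ‖φt t (φinv t y)‖ ≤ M * ‖fderiv ℝ ψinv y (φt t (φinv t y))‖ := by
      calc ‖φt t (φinv t y)‖
          = ‖fderiv ℝ ψ (ψinv y) (fderiv ℝ ψinv y (φt t (φinv t y)))‖ := by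
            rw [happly]
        _ ≤ ‖fderiv ℝ ψ (ψinv y)‖ * ‖fderiv ℝ ψinv y (φt t (φinv t y))‖ :=
            (fderiv ℝ ψ (ψinv y)).le_opNorm _
        _ ≤ M * ‖fderiv ℝ ψinv y (φt t (φinv t y))‖ :=
            mul_le_mul_of_nonneg_right (hM _) (norm_nonneg _)
    have h2 : ‖φt t (φinv t y)‖^2 ≤ M^2 * ‖fderiv ℝ ψinv y (φt t (φinv t y))‖^2 := by
      rw [← mul_pow]
      exact pow_le_pow_left₀ (norm_nonneg _) h1 2
    have h3 : ‖fderiv ℝ ψinv y (φt t (φinv t y))‖^2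
        ≤ (D * |LinearMap.det (fderiv ℝ ψinv y :
            EuclideanSpace ℝ (Fin n) →ₗ[ℝ] EuclideanSpace ℝ (Fin n))|)
          * ‖fderiv ℝ ψinv y (φt t (φinv t y))‖^2 :=
      le_mul_of_one_le_left (by positivity) (hdetBlow y)
    calc ‖φt t (φinv t y)‖^2
        ≤ M^2 * ((D * |LinearMap.det (fderiv ℝ ψinv y :
            EuclideanSpace ℝ (Fin n) →ₗ[ℝ] EuclideanSpace ℝ (Fin n))|)
          * ‖fderiv ℝ ψinv y (φt t (φinv t y))‖^2) :=
          h2.trans (mul_le_mul_of_nonneg_left h3 (by positivity))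
      _ = (M^2 * D) * (|LinearMap.det (fderiv ℝ ψinv y :
            EuclideanSpace ℝ (Fin n) →ₗ[ℝ] EuclideanSpace ℝ (Fin n))|
          * ‖fderiv ℝ ψinv y (φt t (φinv t y))‖^2) := by ring
  -- change of variables
  have hCOV : ∀ t : ℝ, (∫ x, ‖fderiv ℝ ψinv (ψ x) (φt t (φinv t (ψ x)))‖^2)
      = ∫ y, |LinearMap.det (fderiv ℝ ψinv y :
          EuclideanSpace ℝ (Fin n) →ₗ[ℝ] EuclideanSpace ℝ (Fin n))|
        * ‖fderiv ℝ ψinv y (φt t (φinv t y))‖^2 := by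
    intro t
    have h := integral_image_eq_integral_abs_det_fderiv_smul (volume) MeasurableSet.univ
      (f' := fun x => fderiv ℝ ψinv x)
      (fun x _ => (hψinvd x).hasFDerivAt.hasFDerivWithinAt)
      (Function.LeftInverse.injective hinv2).injOn
      (fun x => ‖fderiv ℝ ψinv (ψ x) (φt t (φinv t (ψ x)))‖^2)
    rw [Set.image_univ, (Function.LeftInverse.surjective hinv1).range_eq] at h
    simp only [Measure.restrict_univ] at h
    rw [h]
    have hre : ∀ x : EuclideanSpace ℝ (Fin n), ψ (ψinv x) = x := hinv2
    simp only [hre, smul_eq_mul]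
  -- measurability
  have hφjm : Measurable fun p : ℝ × EuclideanSpace ℝ (Fin n) => φ p.1 p.2 :=
    measurable_uncurry_of_continuous_of_measurable (u := φ)
      (fun x => continuous_iff_continuousAt.2 fun t => (hφt x t).continuousAt)
      (fun t => (hφ t).continuous.measurable)
  have hφtjm : Measurable fun p : ℝ × EuclideanSpace ℝ (Fin n) => φt p.1 p.2 :=
    joint_meas_deriv φ hφjm φt hφt
  have hφinvjm : Measurable fun p : ℝ × EuclideanSpace ℝ (Fin n) => φinv p.1 p.2 :=
    joint_meas_inv φ φinv hφjm hφinv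
  have hVjm : Measurable fun p : ℝ × EuclideanSpace ℝ (Fin n) => φt p.1 (φinv p.1 p.2) :=
    hφtjm.comp (measurable_fst.prodMk hφinvjm)
  have happm : Measurable fun q : (EuclideanSpace ℝ (Fin n) →L[ℝ] EuclideanSpace ℝ (Fin n))
      × EuclideanSpace ℝ (Fin n) => q.1 q.2 :=
    isBoundedBilinearMap_apply.continuous.measurable
  have hwjm : Measurable fun p : ℝ × EuclideanSpace ℝ (Fin n) => ‖φt p.1 (φinv p.1 p.2)‖^2 :=
    hVjm.norm.pow_const 2
  have hlhsjm : Measurable fun p : ℝ × EuclideanSpace ℝ (Fin n) =>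
      ‖fderiv ℝ ψinv (ψ p.2) (φt p.1 (φinv p.1 (ψ p.2)))‖^2 := by
    have h1 : Measurable fun p : ℝ × EuclideanSpace ℝ (Fin n) =>
        (fderiv ℝ ψinv (ψ p.2), φt p.1 (φinv p.1 (ψ p.2))) := by
      apply Measurable.prodMk
      · exact ((hBcont.comp hψ.continuous).measurable).comp measurable_snd
      · exact hVjm.comp (measurable_fst.prodMk
          ((hψ.continuous.measurable).comp measurable_snd))
    exact (happm.comp h1).norm.pow_const 2
  have hgmeas : Measurable fun t : ℝ => ∫ x, ‖φt t (φinv t x)‖^2 :=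
    (MeasureTheory.StronglyMeasurable.integral_prod_right' (ν := volume)
      hwjm.stronglyMeasurable).measurable
  have hlhsmeas : Measurable fun t : ℝ =>
      ∫ x, ‖fderiv ℝ ψinv (ψ x) (φt t (φinv t (ψ x)))‖^2 :=
    (MeasureTheory.StronglyMeasurable.integral_prod_right' (ν := volume)
      hlhsjm.stronglyMeasurable).measurable
  have hwsect : ∀ t : ℝ, Measurable fun y : EuclideanSpace ℝ (Fin n) =>
      ‖φt t (φinv t y)‖^2 := fun t => by
    simpa [Function.comp_def] using hwjm.comp (measurable_prodMk_left (x := t))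
  have hVsect : ∀ t : ℝ, Measurable fun y : EuclideanSpace ℝ (Fin n) =>
      φt t (φinv t y) := fun t => by
    simpa [Function.comp_def] using hVjm.comp (measurable_prodMk_left (x := t))
  have hGFsect : ∀ t : ℝ, Measurable fun y : EuclideanSpace ℝ (Fin n) =>
      |LinearMap.det (fderiv ℝ ψinv y :
        EuclideanSpace ℝ (Fin n) →ₗ[ℝ] EuclideanSpace ℝ (Fin n))|
      * ‖fderiv ℝ ψinv y (φt t (φinv t y))‖^2 := by
    intro t
    apply hdetcont.measurable.mul
    have h1 : Measurable fun y : EuclideanSpace ℝ (Fin n) =>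
        (fderiv ℝ ψinv y, φt t (φinv t y)) :=
      hBcont.measurable.prodMk (hVsect t)
    exact (happm.comp h1).norm.pow_const 2
  -- per-time comparison
  have key1 : ∀ t : ℝ, (∫ x, ‖fderiv ℝ ψinv (ψ x) (φt t (φinv t (ψ x)))‖^2)
      ≤ ((⨆ x, ‖fderiv ℝ ψinv x‖^2) * ⨆ x, |LinearMap.det (fderiv ℝ ψinv x :
          EuclideanSpace ℝ (Fin n) →ₗ[ℝ] EuclideanSpace ℝ (Fin n))|)
        * ∫ x, ‖φt t (φinv t x)‖^2 := by
    intro t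
    rw [hCOV t]
    exact integral_comparison (mul_nonneg hc1n hc2n)
      (hGFsect t).aestronglyMeasurable (hwsect t).aestronglyMeasurable
      (fun y => by positivity) (fun y => by positivity)
      (hpt_up t) (hpt_low t)
  have key2 : ∀ t : ℝ, (∫ x, ‖φt t (φinv t x)‖^2)
      ≤ (M^2 * D) * ∫ x, ‖fderiv ℝ ψinv (ψ x) (φt t (φinv t (ψ x)))‖^2 := by
    intro t
    rw [hCOV t]
    exact integral_comparison hMDn
      (hwsect t).aestronglyMeasurable (hGFsect t).aestronglyMeasurable
      (fun y => by positivity) (fun y => by positivity)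
      (hpt_low t) (hpt_up t)
  -- conclusion
  have hrw : ∀ (t : ℝ) x, φ t (φinv t (ψ x)) = ψ x := fun t x => (hφinv t).2 (ψ x)
  simp only [hrw]
  exact interval_comparison (mul_nonneg hc1n hc2n) hlhsmeas hgmeas
    (fun t => integral_nonneg fun x => by positivity)
    (fun t => integral_nonneg fun x => by positivity)
    key1 key2
end
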